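/- arXiv:2411.12009 — 10 statements merged into one kernel-verified Lean document; each statement's English description precedes it below -/
import Mathlib

section
/- The only solutions to the equation 2^y - 1 = 3^r * (2^(x+1) + 1)^w in integers x ≥ 3, y ≥ 1, w ≥ 0, and r ≥ 0 are (y, w, r) = (1, 0, 0) and (y, w, r) = (2, 0, 1). -/
lemma mod6 (n : ℕ) (h : 2 ^ n % 9 = 1) : 6 ∣ n := by
  have h2 : 2 ^ n % 9 = 2 ^ (n % 6) % 9 := by
    conv_lhs => rw [← Nat.div_add_mod n 6, pow_add, pow_mul]
    rw [Nat.mul_mod, Nat.pow_mod]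
    norm_num
  rw [h2] at h
  have hlt : n % 6 < 6 := Nat.mod_lt _ (by norm_num)
  interval_cases hm : n % 6 <;> simp_all <;> omega

lemma key (n k : ℕ) (hn : 1 ≤ n) (h : 2 ^ n - 1 = 3 ^ k) :
    (n = 1 ∧ k = 0) ∨ (n = 2 ∧ k = 1) := by
  have h1 : 1 ≤ 2 ^ n := Nat.one_le_two_pow
  have he : 2 ^ n = 3 ^ k + 1 := by omega
  rcases k with _ | _ | j
  · left
    refine ⟨?_, rfl⟩
    have h2 : (2:ℕ) ^ n = 2 ^ 1 := by simpa using he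
    exact Nat.pow_right_injective (by norm_num) h2
  · right
    refine ⟨?_, rfl⟩
    have h2 : (2:ℕ) ^ n = 2 ^ 2 := by norm_num at he ⊢; omega
    exact Nat.pow_right_injective (by norm_num) h2
  · exfalso
    have h9 : 9 ∣ 2 ^ n - 1 := by
      rw [h]; exact Dvd.dvd.trans ⟨3 ^ j, by ring⟩ dvd_rfl
    have hm : 2 ^ n % 9 = 1 := by omega
    obtain ⟨q, hq⟩ := mod6 n hm
    have h63 : (63 : ℕ) ∣ 2 ^ n - 1 := by
      have hd := Nat.sub_dvd_pow_sub_pow (2 ^ 6) 1 q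
      rw [← pow_mul, ← hq, one_pow] at hd
      norm_num at hd
      exact hd
    have h7 : (7 : ℕ) ∣ 3 ^ (j + 2) := h ▸ dvd_trans (by norm_num) h63
    have := Nat.Prime.dvd_of_dvd_pow (p := 7) (by norm_num) h7
    norm_num at this

theorem stmt0 (x y w r : ℕ) (hx : 3 ≤ x) (hy : 1 ≤ y)
    (h : 2 ^ y - 1 = 3 ^ r * (2 ^ (x + 1) + 1) ^ w) :
    (y = 1 ∧ w = 0 ∧ r = 0) ∨ (y = 2 ∧ w = 0 ∧ r = 1) := by
  rcases Nat.eq_zero_or_pos w with hw | hw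
  · subst hw
    rw [pow_zero, mul_one] at h
    rcases key y r hy h with ⟨h1, h2⟩ | ⟨h1, h2⟩
    · exact Or.inl ⟨h1, rfl, h2⟩
    · exact Or.inr ⟨h1, rfl, h2⟩
  · exfalso
    set n := x + 1 with hn
    set N := 2 ^ n + 1 with hNdef
    have hN1 : 1 < N := by
      have : 2 ≤ 2 ^ n := Nat.one_lt_two_pow (by omega)
      omega
    haveI : NeZero N := ⟨by omega⟩
    have h1 : 1 ≤ 2 ^ y := Nat.one_le_two_pow
    -- N divides 2^y - 1
    have hdvd : N ∣ 2 ^ y - 1 := by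
      rw [h]; exact Dvd.dvd.mul_left (dvd_pow_self N (by omega)) _
    -- in ZMod N
    have hz : (2 : ZMod N) ^ y = 1 := by
      have h0 : ((2 ^ y - 1 : ℕ) : ZMod N) = 0 :=
        (ZMod.natCast_eq_zero_iff _ _).mpr hdvd
      rw [Nat.cast_sub h1] at h0
      push_cast at h0
      linear_combination h0
    have hneg : (2 : ZMod N) ^ n = -1 := by
      have h0 : ((N : ℕ) : ZMod N) = 0 := ZMod.natCast_self _
      rw [hNdef] at h0
      push_cast at h0
      linear_combination h0
    -- split y = n * q + s
    have hdm := Nat.div_add_mod y n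
    set q := y / n with hq
    set s := y % n with hs
    have hslt : s < n := Nat.mod_lt _ (by omega)
    have hrw : (2 : ZMod N) ^ y = (-1) ^ q * 2 ^ s := by
      rw [← hdm, pow_add, pow_mul, hneg]
    rw [hrw] at hz
    have hs0 : s = 0 := by
      rcases Nat.even_or_odd q with hq2 | hq2
      · rw [hq2.neg_one_pow, one_mul] at hz
        have h0 : ((2 ^ s - 1 : ℕ) : ZMod N) = 0 := by
          rw [Nat.cast_sub Nat.one_le_two_pow]
          push_cast
          linear_combination hz
        have hdvd2 : N ∣ 2 ^ s - 1 := (ZMod.natCast_eq_zero_iff _ _).mp h0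
        have hlt : 2 ^ s - 1 < N := by
          have : 2 ^ s < 2 ^ n := Nat.pow_lt_pow_right (by norm_num) hslt
          omega
        have := Nat.eq_zero_of_dvd_of_lt hdvd2
        by_contra hs0
        have h2s : 2 ≤ 2 ^ s := Nat.one_lt_two_pow (by omega)
        have := Nat.le_of_dvd (by omega) hdvd2
        omega
      · rw [hq2.neg_one_pow, neg_mul, one_mul] at hz
        have h0 : ((2 ^ s + 1 : ℕ) : ZMod N) = 0 := by
          push_cast
          linear_combination -hz
        have hdvd2 : N ∣ 2 ^ s + 1 := (ZMod.natCast_eq_zero_iff _ _).mp h0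
        have hlt : 2 ^ s + 1 < N := by
          have : 2 ^ s < 2 ^ n := Nat.pow_lt_pow_right (by norm_num) hslt
          omega
        have h5 : 0 < 2 ^ s + 1 := Nat.succ_pos _
        have := Nat.le_of_dvd h5 hdvd2
        omega
    -- so n ∣ y, hence 2^n - 1 ∣ 2^y - 1
    have hyn : y = n * q := by omega
    set M := 2 ^ n - 1 with hM
    have h2n : 2 ≤ 2 ^ n := Nat.one_lt_two_pow (by omega)
    have hMdvd : M ∣ 2 ^ y - 1 := by
      have hd := Nat.sub_dvd_pow_sub_pow (2 ^ n) 1 q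
      rw [← pow_mul, ← hyn, one_pow] at hd
      exact hd
    -- M coprime to N
    have hModd : M % 2 = 1 := by
      have h2 : 2 ^ n = 2 * 2 ^ (n - 1) := by
        rw [← pow_succ', Nat.sub_add_cancel (by omega)]
      omega
    have hcop : Nat.Coprime M N := by
      have hN : N = M + 2 := by omega
      rw [hN]
      have : Nat.Coprime M 2 := Nat.coprime_two_right.mpr (Nat.odd_iff.mpr hModd)
      simpa [Nat.coprime_add_self_right] using this
    have hMdvd3 : M ∣ 3 ^ r := by
      rw [h] at hMdvd
      exact (Nat.Coprime.dvd_of_dvd_mul_right (hcop.pow_right w)) hMdvd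
    obtain ⟨j, hj, hMj⟩ := (Nat.dvd_prime_pow Nat.prime_three).mp hMdvd3
    rcases key n j (by omega) hMj with ⟨h1, _⟩ | ⟨h1, _⟩ <;> omega
end

section
/- The only solutions to the equation 2^y * (2^x + 1)^z - 1 = (2^(x+1) + 1)^w in integers x ≥ 3, y ≥ 1, z ≥ 0, w ≥ 0 are (y, z, w) = (1, 0, 0) and (y, z, w) = (1, 1, 1). -/
/-!
With `n = 2 ^ x + 1` and `a = 2 ^ (x + 1) + 1 = 2n - 1` the equation reads
`2 ^ y * n ^ z = a ^ w + 1`. As `a ≡ 1 mod 4`, the right side is `2 mod 4` and `y = 1`.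
If `z > 0`, then `a ≡ -1 mod n` makes `w` odd, and lifting the exponent at each (odd) prime
`p ∣ n` turns `v_p(2 n ^ z) = v_p(a ^ w + 1)` into `v_p(w) = (z - 1) v_p(n)`, so
`n ^ (z - 1) ∣ w`. Comparing sizes gives `w ≤ z`, and `n ^ (z - 1) ≤ z` leaves only `z = 1`.
-/

lemma eq_one_of_two_pow_mul_odd_eq {y m k : ℕ} (hm : Odd m) (hk : k % 4 = 2) (h : 2 ^ y * m = k) :
    y = 1 := by
  obtain ⟨j, rfl⟩ := hm
  rcases y with _ | _ | u
  · omega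
  · rfl
  · have h4 : 4 ∣ 2 ^ (u + 2) := pow_dvd_pow 2 (by omega : 2 ≤ u + 2)
    have := h ▸ h4.mul_right (2 * j + 1)
    omega

lemma pow_add_one_mod_four {a : ℕ} (ha : a % 4 = 1) (w : ℕ) : (a ^ w + 1) % 4 = 2 := by
  rw [Nat.add_mod, Nat.pow_mod, ha, one_pow]
  rfl

lemma odd_of_dvd_pow_add_one {n a w : ℕ} (hn : 2 < n) (ha : n ∣ a + 1) (h : n ∣ a ^ w + 1) :
    Odd w := by
  have ha' : (a : ZMod n) = -1 :=
    eq_neg_of_add_eq_zero_left (by exact_mod_cast (ZMod.natCast_eq_zero_iff _ _).2 ha)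
  by_contra hw
  have h2 : ((2 : ℕ) : ZMod n) = 0 := by
    have := (ZMod.natCast_eq_zero_iff _ _).2 h
    push_cast [ha', (Nat.not_odd_iff_even.1 hw).neg_one_pow] at this
    rw [one_add_one_eq_two] at this
    exact_mod_cast this
  have := Nat.le_of_dvd two_pos ((ZMod.natCast_eq_zero_iff _ _).1 h2)
  omega

lemma pow_pred_dvd_of_two_mul_pow_eq {n a z w : ℕ} (hn : Odd n) (ha : a + 1 = 2 * n) (hw : Odd w)
    (h : 2 * n ^ z = a ^ w + 1) : n ^ (z - 1) ∣ w := by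
  refine (Nat.factorization_prime_le_iff_dvd (pow_ne_zero _ hn.pos.ne') hw.pos.ne').1
    fun p hp ↦ ?_
  rw [Nat.factorization_pow, Finsupp.smul_apply, smul_eq_mul]
  obtain hpn | hpn := em' (p ∣ n)
  · simp [Nat.factorization_eq_zero_of_not_dvd hpn]
  have : Fact p.Prime := ⟨hp⟩
  have hpa1 : p ∣ a + 1 := ha ▸ hpn.mul_left 2
  have hpa : ¬ p ∣ a := fun hpa ↦ hp.not_dvd_one ((Nat.dvd_add_right hpa).1 hpa1)
  have hpo : Odd p := hn.of_dvd_nat hpn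
  have hv2 : padicValNat p 2 = 0 := padicValNat.eq_zero_of_not_dvd fun hp2 ↦
    Nat.not_odd_iff_even.2 even_two ((Nat.prime_dvd_prime_iff_eq hp Nat.prime_two).1 hp2 ▸ hpo)
  have hval : z * padicValNat p n = padicValNat p n + padicValNat p w := by
    have := padicValNat.pow_add_pow (y := 1) hpo (by simpa using hpa1) hpa hw
    rw [one_pow, ← h, ha, padicValNat.mul two_ne_zero (pow_ne_zero _ hn.pos.ne'),
      padicValNat.mul two_ne_zero hn.pos.ne', padicValNat.pow, hv2] at this
    simpa using this
  rw [Nat.factorization_def _ hp, Nat.factorization_def _ hp]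
  rcases z with _ | z
  · simp
  · rw [add_mul, one_mul] at hval
    simp only [add_tsub_cancel_right]
    omega

lemma le_of_two_mul_pow_eq {n a z w : ℕ} (hn : 2 ≤ n) (ha : a + 1 = 2 * n)
    (h : 2 * n ^ z = a ^ w + 1) : w ≤ z := by
  by_contra! hzw
  have : 3 * n ^ z ≤ a ^ w := calc
    3 * n ^ z ≤ a * a ^ z := Nat.mul_le_mul (by omega) (Nat.pow_le_pow_left (by omega) z)
    _ = a ^ (z + 1) := (pow_succ' a z).symm
    _ ≤ a ^ w := Nat.pow_le_pow_right (by omega) hzw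
  have : 0 < n ^ z := by positivity
  omega

theorem eq_of_two_pow_mul_pow_eq_pow_add_one {n a y z w : ℕ} (hn : Odd n) (hn1 : n ≠ 1)
    (ha : a + 1 = 2 * n) (h : 2 ^ y * n ^ z = a ^ w + 1) :
    (y = 1 ∧ z = 0 ∧ w = 0) ∨ (y = 1 ∧ z = 1 ∧ w = 1) := by
  have hn3 : 3 ≤ n := by have := Nat.odd_iff.1 hn; omega
  have ha4 : a % 4 = 1 := by obtain ⟨k, rfl⟩ := hn; omega
  obtain rfl : y = 1 := eq_one_of_two_pow_mul_odd_eq hn.pow (pow_add_one_mod_four ha4 w) h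
  rw [pow_one] at h
  rcases z with _ | z
  · have : a ^ w = 1 := by simpa using h.symm
    exact .inl ⟨rfl, rfl, (Nat.pow_eq_one.1 this).resolve_left (by omega)⟩
  have hw : Odd w := odd_of_dvd_pow_add_one (by omega) (ha ▸ dvd_mul_left n 2)
    (h ▸ (dvd_pow_self n z.succ_ne_zero).mul_left 2)
  have hdvd : n ^ z ∣ w := by simpa using pow_pred_dvd_of_two_mul_pow_eq hn ha hw h
  have hwz : w ≤ z + 1 := le_of_two_mul_pow_eq (by omega) ha h
  obtain rfl : z = 0 := by
    by_contra! hz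
    obtain ⟨s, rfl⟩ : ∃ s, z = s + 1 := ⟨z - 1, by omega⟩
    have : s < 3 ^ s := Nat.lt_pow_self (by norm_num)
    have : 3 * 3 ^ s ≤ n ^ (s + 1) := pow_succ' 3 s ▸ Nat.pow_le_pow_left hn3 _
    have := Nat.le_of_dvd hw.pos hdvd
    omega
  rw [zero_add, pow_one] at h
  have : a ^ w = a := by omega
  exact .inr ⟨rfl, rfl, (Nat.pow_eq_self_iff (by omega)).1 this⟩

theorem stmt1_general (x y z w : ℕ) (hx : 3 ≤ x)
    (h : 2 ^ y * (2 ^ x + 1) ^ z - 1 = (2 ^ (x + 1) + 1) ^ w) :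
    (y = 1 ∧ z = 0 ∧ w = 0) ∨ (y = 1 ∧ z = 1 ∧ w = 1) := by
  have hn : Odd (2 ^ x + 1) := (Nat.even_pow.2 ⟨even_two, by omega⟩).add_one
  have hn1 : 2 ^ x + 1 ≠ 1 := by simp
  have ha : 2 ^ (x + 1) + 1 + 1 = 2 * (2 ^ x + 1) := by ring
  have : 0 < 2 ^ y * (2 ^ x + 1) ^ z := by positivity
  exact eq_of_two_pow_mul_pow_eq_pow_add_one hn hn1 ha (by omega)

theorem stmt1 (x y z w : ℕ) (hx : 3 ≤ x) (hy : 1 ≤ y)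
    (h : 2 ^ y * (2 ^ x + 1) ^ z - 1 = (2 ^ (x + 1) + 1) ^ w) :
    (y = 1 ∧ z = 0 ∧ w = 0) ∨ (y = 1 ∧ z = 1 ∧ w = 1) :=
  stmt1_general x y z w hx h
end

section
/- The only solutions to the equation 2^y * (2^x - 1)^z + 1 = (2^(x+1) - 1)^w in integers x ≥ 3, y ≥ 1, z ≥ 0, w ≥ 0 are (y, z, w) = (x+2, 1, 2) and (y, z, w) = (1, 1, 1). -/
/-!
Put `a = 2 ^ x - 1`; the equation becomes `2 ^ y * a ^ z + 1 = (2a + 1) ^ w` with `a` odd and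
`a + 1` a power of two.

For even `w = 2v`, set `c = (2a + 1) ^ v`, so that `(c - 1)(c + 1) = 2 ^ y * a ^ z`. Since
`a ∣ c - 1` and `a` is odd, `c + 1` is coprime to `a`, hence a power of two. But
`(2a + 1) ^ 2 ≡ 1 [MOD 2 ^ (x + 2)]`, so `(2a + 1) ^ v + 1` can only be a power of two when `v = 1`,
and then `y = x + 2`, `z = 1`.

For odd `w`, `(2a + 1) ^ w ≡ 3 [MOD 4]` gives `y = 1`. For an odd prime `p ∣ a`, lifting the
exponent in `2 * a ^ z = (2a + 1) ^ w - 1` gives `p ^ (z - 1) ∣ w`. Comparing sizes gives `w ≤ z`,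
and the two facts together force `z = w = 1`.
-/

theorem odd_of_add_one_eq_two_pow {a x : ℕ} (hx : x ≠ 0) (ha : a + 1 = 2 ^ x) : Odd a := by
  obtain ⟨s, rfl⟩ := Nat.exists_eq_succ_of_ne_zero hx
  rw [pow_succ] at ha
  exact Nat.odd_iff.2 (by omega)

theorem padicValNat_two_pow_mul_of_odd {m : ℕ} (hm : Odd m) (y : ℕ) :
    padicValNat 2 (2 ^ y * m) = y := by
  rw [padicValNat.mul (by positivity) hm.pos.ne', padicValNat.prime_pow,
    padicValNat.eq_zero_of_not_dvd hm.not_two_dvd_nat, add_zero]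

theorem eq_one_of_pow_add_one_eq_two_pow {b s v k : ℕ} (hb : 1 < b) (hbs : b + 1 = 2 ^ s)
    (hv : v ≠ 0) (h : b ^ v + 1 = 2 ^ k) : v = 1 := by
  obtain ⟨t, ht⟩ := odd_of_add_one_eq_two_pow (by rintro rfl; omega) hbs
  have hsq : b ^ 2 ≡ 1 [MOD 2 ^ (s + 1)] := by
    refine ((Nat.modEq_iff_dvd' (Nat.one_le_pow _ _ (by omega))).2 ?_).symm
    rw [← one_pow 2, Nat.sq_sub_sq, hbs, pow_succ]
    exact mul_dvd_mul_left _ ⟨t, by omega⟩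
  have hpow : b ^ v + 1 ≡ b ^ (v % 2) + 1 [MOD 2 ^ (s + 1)] := by
    have := ((hsq.pow (v / 2)).mul_left (b ^ (v % 2))).add_right 1
    rwa [← pow_mul, ← pow_add, Nat.mod_add_div, one_pow, mul_one] at this
  by_contra hv1
  have hlt : 2 ^ (s + 1) < 2 ^ k := by
    have : b ^ 2 ≤ b ^ v := Nat.pow_le_pow_right (by omega) (by omega)
    have : 3 * b ≤ b ^ 2 := by rw [sq]; exact Nat.mul_le_mul_right b (by omega)
    rw [pow_succ, ← hbs, ← h]
    omega
  have hdvd : 2 ^ (s + 1) ∣ b ^ (v % 2) + 1 := by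
    refine Nat.modEq_zero_iff_dvd.1 (hpow.symm.trans (Nat.modEq_zero_iff_dvd.2 ?_))
    exact h ▸ pow_dvd_pow 2 ((Nat.pow_lt_pow_iff_right (by norm_num)).1 hlt).le
  have hle := Nat.le_of_dvd (by positivity) hdvd
  rw [pow_succ] at hle
  rcases Nat.mod_two_eq_zero_or_one v with h2 | h2 <;>
    simp only [h2, pow_zero, pow_one] at hle <;> omega

theorem exists_add_one_eq_two_pow_of_sq_eq {a c y z : ℕ} (ha : Odd a) (hac : a ∣ c - 1)
    (h : c ^ 2 = 2 ^ y * a ^ z + 1) : ∃ k, c + 1 = 2 ^ k := by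
  have hc : 1 ≤ c := by nlinarith [Nat.zero_le (2 ^ y * a ^ z)]
  obtain ⟨m, hm⟩ := hac
  have hcop : Nat.Coprime (c + 1) a := by
    rw [show c + 1 = a * m + 2 by omega, Nat.coprime_mul_left_add_left]
    exact ha.coprime_two_left
  have hfac : (c + 1) * (c - 1) = 2 ^ y * a ^ z := by
    rw [← Nat.sq_sub_sq, h]
    simp
  have hdvd : c + 1 ∣ 2 ^ y := (hcop.pow_right z).dvd_of_dvd_mul_right ⟨c - 1, hfac.symm⟩
  obtain ⟨k, -, hk⟩ := (Nat.dvd_prime_pow Nat.prime_two).1 hdvd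
  exact ⟨k, hk⟩

theorem exponents_eq_of_even {a x y z w : ℕ} (ha1 : 1 < a) (ha : a + 1 = 2 ^ x) (hw : Even w)
    (h : 2 ^ y * a ^ z + 1 = (2 * a + 1) ^ w) : y = x + 2 ∧ z = 1 ∧ w = 2 := by
  have hodd : Odd a := odd_of_add_one_eq_two_pow (by rintro rfl; omega) ha
  obtain ⟨v, rfl⟩ := hw
  have hv : v ≠ 0 := by
    rintro rfl
    have : 0 < 2 ^ y * a ^ z := by positivity
    rw [add_zero, pow_zero] at h
    omega
  have hsq : ((2 * a + 1) ^ v) ^ 2 = 2 ^ y * a ^ z + 1 := by rw [h, ← pow_mul, mul_two]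
  have hdvd : a ∣ (2 * a + 1) ^ v - 1 := by
    simpa using (Dvd.intro_left 2 rfl).trans (Nat.sub_dvd_pow_sub_pow (2 * a + 1) 1 v)
  obtain ⟨k, hk⟩ := exists_add_one_eq_two_pow_of_sq_eq hodd hdvd hsq
  obtain rfl : v = 1 :=
    eq_one_of_pow_add_one_eq_two_pow (s := x + 1) (by omega) (by rw [pow_succ]; omega) hv hk
  have h2 : 2 ^ y * a ^ z = 2 ^ (x + 2) * a := by
    have : (2 * a + 1) ^ (1 + 1) = 2 ^ (x + 2) * a + 1 := by
      rw [show 2 ^ (x + 2) = 4 * (a + 1) by rw [ha]; ring]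
      ring
    omega
  obtain rfl : y = x + 2 := by
    simpa [padicValNat_two_pow_mul_of_odd, hodd, hodd.pow] using congrArg (padicValNat 2) h2
  refine ⟨rfl, (Nat.pow_eq_self_iff ha1).1 ?_, rfl⟩
  exact Nat.eq_of_mul_eq_mul_left (by positivity) h2

theorem two_exponent_eq_one_of_odd {a y z w : ℕ} (ha : Odd a) (hw : Odd w)
    (h : 2 ^ y * a ^ z + 1 = (2 * a + 1) ^ w) : y = 1 := by
  have h4 : (2 * a + 1) ^ w % 4 = 3 := by
    obtain ⟨t, rfl⟩ := ha
    obtain ⟨m, rfl⟩ := hw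
    rw [Nat.pow_mod, show (2 * (2 * t + 1) + 1) % 4 = 3 by omega, pow_succ, pow_mul, Nat.mul_mod,
      Nat.pow_mod]
    norm_num
  have hodd : a ^ z % 2 = 1 := Nat.odd_iff.1 ha.pow
  rcases y with _ | _ | y
  · omega
  · rfl
  · have : 4 ∣ 2 ^ (y + 1 + 1) * a ^ z := Dvd.dvd.mul_right ⟨2 ^ y, by ring⟩ _
    omega

theorem le_of_two_mul_pow_add_one_eq_pow {a z w : ℕ} (ha : 2 ≤ a)
    (h : 2 * a ^ z + 1 = (2 * a + 1) ^ w) : w ≤ z := by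
  by_contra! hzw
  have h1 : (2 * a + 1) ^ (z + 1) ≤ (2 * a + 1) ^ w := Nat.pow_le_pow_right (by omega) hzw
  have h2 : a ^ z ≤ (2 * a + 1) ^ z := Nat.pow_le_pow_left (by omega) z
  have h3 : 1 ≤ a ^ z := Nat.one_le_pow _ _ (by omega)
  rw [pow_succ] at h1
  nlinarith

theorem pow_sub_one_dvd_of_two_mul_pow_add_one_eq_pow {p a z w : ℕ} [hp : Fact p.Prime]
    (hp_odd : Odd p) (hpa : p ∣ a) (ha : a ≠ 0) (hw : w ≠ 0)
    (h : 2 * a ^ z + 1 = (2 * a + 1) ^ w) : p ^ (z - 1) ∣ w := by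
  have hp2 : ¬p ∣ 2 := fun hd => by
    obtain rfl := (Nat.prime_dvd_prime_iff_eq hp.out Nat.prime_two).1 hd
    exact absurd hp_odd (by decide)
  have hpb : ¬p ∣ 2 * a + 1 := fun hd =>
    hp.out.one_lt.ne' (Nat.dvd_one.1 ((Nat.dvd_add_right (hpa.mul_left 2)).1 hd))
  have hlte := padicValNat.pow_sub_pow hp_odd (y := 1) (by omega)
    (by simpa using hpa.mul_left 2) hpb hw
  rw [one_pow, ← h, Nat.add_sub_cancel, Nat.add_sub_cancel,
    padicValNat.mul two_ne_zero (by positivity), padicValNat.mul two_ne_zero ha,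
    padicValNat.eq_zero_of_not_dvd hp2, padicValNat.pow _ z, zero_add, zero_add] at hlte
  have hV : z - 1 ≤ padicValNat p w :=
    calc z - 1 ≤ (z - 1) * padicValNat p a :=
          Nat.le_mul_of_pos_right _ (one_le_padicValNat_of_dvd ha hpa)
      _ = padicValNat p w := by rw [Nat.sub_one_mul]; omega
  exact (pow_dvd_pow p hV).trans pow_padicValNat_dvd

theorem exponents_eq_one_of_two_mul_pow_add_one_eq_pow {a z w : ℕ} (ha : Odd a) (ha1 : 1 < a)
    (h : 2 * a ^ z + 1 = (2 * a + 1) ^ w) : z = 1 ∧ w = 1 := by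
  have ha3 : 3 ≤ a := by obtain ⟨t, rfl⟩ := ha; omega
  have hw : w ≠ 0 := by
    rintro rfl
    have : 0 < a ^ z := by positivity
    rw [pow_zero] at h
    omega
  have hwz := le_of_two_mul_pow_add_one_eq_pow (by omega) h
  rcases z with _ | _ | z
  · have : 2 * a + 1 ≤ (2 * a + 1) ^ w := Nat.le_self_pow hw _
    omega
  · omega
  · exfalso
    set p := a.minFac
    have hp : p.Prime := Nat.minFac_prime (by omega)
    have hp2 : p ≠ 2 := fun hp2 => ha.not_two_dvd_nat (hp2 ▸ a.minFac_dvd)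
    have : Fact p.Prime := ⟨hp⟩
    have hdvd := pow_sub_one_dvd_of_two_mul_pow_add_one_eq_pow (hp.odd_of_ne_two hp2)
      a.minFac_dvd (by omega) hw h
    have h1 : p ^ (z + 1) ≤ w := Nat.le_of_dvd (by omega) hdvd
    have h2 : 3 ^ (z + 1) ≤ p ^ (z + 1) := Nat.pow_le_pow_left (by have := hp.two_le; omega) _
    have h3 : z < 3 ^ z := Nat.lt_pow_self (by norm_num)
    rw [pow_succ] at h2
    omega

theorem stmt2_general (x y z w : ℕ) (hx : 3 ≤ x)
    (h : 2 ^ y * (2 ^ x - 1) ^ z + 1 = (2 ^ (x + 1) - 1) ^ w) :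
    (y = x + 2 ∧ z = 1 ∧ w = 2) ∨ (y = 1 ∧ z = 1 ∧ w = 1) := by
  obtain ⟨a, ha⟩ : ∃ a, a + 1 = 2 ^ x := ⟨2 ^ x - 1, Nat.sub_add_cancel Nat.one_le_two_pow⟩
  have ha1 : 1 < a := by
    have : 2 ^ 3 ≤ 2 ^ x := Nat.pow_le_pow_right (by norm_num) hx
    omega
  have hb : 2 ^ (x + 1) - 1 = 2 * a + 1 := by rw [pow_succ]; omega
  rw [show 2 ^ x - 1 = a by omega, hb] at h
  rcases Nat.even_or_odd w with hw | hw
  · exact .inl (exponents_eq_of_even ha1 ha hw h)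
  · have hodd : Odd a := odd_of_add_one_eq_two_pow (by omega) ha
    obtain rfl := two_exponent_eq_one_of_odd hodd hw h
    rw [pow_one] at h
    exact .inr ⟨rfl, exponents_eq_one_of_two_mul_pow_add_one_eq_pow hodd ha1 h⟩

theorem stmt2 (x y z w : ℕ) (hx : 3 ≤ x) (hy : 1 ≤ y)
    (h : 2 ^ y * (2 ^ x - 1) ^ z + 1 = (2 ^ (x + 1) - 1) ^ w) :
    (y = x + 2 ∧ z = 1 ∧ w = 2) ∨ (y = 1 ∧ z = 1 ∧ w = 1) :=
  stmt2_general x y z w hx h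
end

section
/- If k is even and 3^k - 1 = 2*x^2 with x a positive integer, then k ≤ 2. -/
set_option maxHeartbeats 1000000

lemma sq_helper {a b c : ℕ} (hab : Nat.Coprime a b) (h : a * b = c ^ 2) :
    ∃ d, a = d ^ 2 :=
  exists_eq_pow_of_mul_eq_pow (by rw [Nat.isUnit_iff]; exact Nat.Coprime.gcd_eq_one hab) h

lemma even_case (t x : ℕ) (ht3 : 3 ≤ t) (htodd : Odd t)
    (heq : (t * t) * (t * t) = 2 * x ^ 2 + 1) : False := by
  obtain ⟨e, he⟩ := htodd
  obtain ⟨p, hp⟩ : Even (e * (e + 1)) := Nat.even_mul_succ_self e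
  have hsp : t * t = 8 * p + 1 := by
    subst he
    have h0 : (2 * e + 1) * (2 * e + 1) = 4 * (e * (e + 1)) + 1 := by ring
    rw [h0, hp]; ring
  have h1 : (8 * p + 1) * (8 * p + 1) = 2 * x ^ 2 + 1 := by rw [← hsp]; exact heq
  have hx2 : x ^ 2 = 32 * p ^ 2 + 8 * p := by nlinarith [h1]
  have hex2 : Even (x ^ 2) := ⟨16 * p ^ 2 + 4 * p, by linarith⟩
  have hxe : Even x := (Nat.even_pow' (by norm_num)).mp hex2
  obtain ⟨y, hy⟩ := hxe
  have hxy : x ^ 2 = 4 * y ^ 2 := by rw [hy]; ring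
  have hy2 : (2 * p) * (4 * p + 1) = y ^ 2 := by nlinarith [hx2, hxy]
  have hcop : Nat.Coprime (2 * p) (4 * p + 1) := by
    have h := (Nat.coprime_add_mul_left_right (2 * p) 1 2).mpr (Nat.coprime_one_right _)
    rwa [show 1 + 2 * p * 2 = 4 * p + 1 from by ring] at h
  obtain ⟨d, hd⟩ := sq_helper hcop hy2
  have hst : t * t = 4 * d ^ 2 + 1 := by linarith [hsp, hd]
  have hdt : 2 * d < t := by
    by_contra hle
    push_neg at hle
    have h2 : t * t ≤ (2 * d) * (2 * d) := Nat.mul_le_mul hle hle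
    nlinarith [hst, h2]
  have h3 : (2 * d + 1) * (2 * d + 1) ≤ t * t := Nat.mul_le_mul hdt hdt
  have h3' : 4 * d ^ 2 + 4 * d + 1 ≤ 4 * d ^ 2 + 1 := by
    calc 4 * d ^ 2 + 4 * d + 1 = (2 * d + 1) * (2 * d + 1) := by ring
    _ ≤ t * t := h3
    _ = 4 * d ^ 2 + 1 := hst
  have hd0 : d = 0 := by linarith
  subst hd0
  have h9 : 9 ≤ t * t := Nat.mul_le_mul ht3 ht3
  simp at hst
  omega

lemma odd_case (m x : ℕ) (hmo : Odd m) (heq : 3 ^ m * 3 ^ m = 2 * x ^ 2 + 1) :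
    m ≤ 1 := by
  obtain ⟨r, rfl⟩ := hmo
  have hu : Odd ((3 : ℕ) ^ r) := Odd.pow ⟨1, by norm_num⟩
  obtain ⟨e, he⟩ := hu
  have hq : (3 : ℕ) ^ (2 * r + 1) = 4 * (3 * (e * e + e)) + 3 := by
    rw [pow_succ, two_mul, pow_add, he]; ring
  obtain ⟨q, hqd⟩ : ∃ q, (3 : ℕ) ^ (2 * r + 1) = 4 * q + 3 := ⟨_, hq⟩
  have h1 : (4 * q + 3) * (4 * q + 3) = 2 * x ^ 2 + 1 := by rw [← hqd]; exact heq
  have hx2 : x ^ 2 = 8 * q ^ 2 + 12 * q + 4 := by nlinarith [h1]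
  have hex2 : Even (x ^ 2) := ⟨4 * q ^ 2 + 6 * q + 2, by linarith⟩
  have hxe : Even x := (Nat.even_pow' (by norm_num)).mp hex2
  obtain ⟨y, hy⟩ := hxe
  have hxy : x ^ 2 = 4 * y ^ 2 := by rw [hy]; ring
  have hy2 : (q + 1) * (2 * q + 1) = y ^ 2 := by nlinarith [hx2, hxy]
  have hcop : Nat.Coprime (q + 1) (2 * q + 1) := by
    have h0 : Nat.Coprime (q + 1) q := by
      have h := (Nat.coprime_add_mul_right_left 1 q 1).mpr (Nat.coprime_one_left q)
      rwa [show 1 + 1 * q = q + 1 from by ring] at h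
    have h := (Nat.coprime_add_mul_left_right (q + 1) q 1).mpr h0
    rwa [show q + (q + 1) * 1 = 2 * q + 1 from by ring] at h
  obtain ⟨d, hd⟩ := sq_helper hcop hy2
  have hd1 : 1 ≤ d := by
    by_contra h0
    push_neg at h0
    interval_cases d <;> simp at hd
  obtain ⟨f, rfl⟩ : ∃ f, d = f + 1 := ⟨d - 1, by omega⟩
  have hfac : (2 * f + 1) * (2 * f + 3) = 3 ^ (2 * r + 1) := by
    rw [hqd]; nlinarith [hd]
  rcases Nat.eq_zero_or_pos f with rfl | hf
  · have h3 : (3 : ℕ) ^ 1 = 3 ^ (2 * r + 1) := by simpa using hfac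
    have := Nat.pow_right_injective (by norm_num : 2 ≤ 3) h3
    omega
  · exfalso
    have hdvd1 : (2 * f + 1) ∣ 3 ^ (2 * r + 1) := ⟨2 * f + 3, hfac.symm⟩
    have hdvd2 : (2 * f + 3) ∣ 3 ^ (2 * r + 1) := ⟨2 * f + 1, by rw [← hfac]; ring⟩
    obtain ⟨i, hi, hie⟩ := (Nat.dvd_prime_pow (by norm_num)).mp hdvd1
    obtain ⟨j, hj, hje⟩ := (Nat.dvd_prime_pow (by norm_num)).mp hdvd2
    have hi1 : 1 ≤ i := by
      rcases Nat.eq_zero_or_pos i with rfl | h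
      · norm_num at hie
        omega
      · exact h
    have hj1 : 1 ≤ j := by
      rcases Nat.eq_zero_or_pos j with rfl | h
      · norm_num at hje
        omega
      · exact h
    have h3i : (3 : ℕ) ∣ 2 * f + 1 := hie ▸ dvd_pow_self 3 (by omega)
    have h3j : (3 : ℕ) ∣ 2 * f + 3 := hje ▸ dvd_pow_self 3 (by omega)
    omega

theorem stmt7 (k x : ℕ) (hk : 1 ≤ k) (hke : Even k) (hx : 0 < x)
    (h : 3 ^ k - 1 = 2 * x ^ 2) : k ≤ 2 := by
  obtain ⟨m, rfl⟩ := hke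
  have hm1 : 1 ≤ m := by omega
  rw [pow_add] at h
  have hs3 : 3 ≤ 3 ^ m := by
    calc 3 = 3 ^ 1 := by norm_num
    _ ≤ 3 ^ m := Nat.pow_le_pow_right (by norm_num) hm1
  have h9 : (1 : ℕ) ≤ 3 ^ m * 3 ^ m := le_trans (by norm_num) (Nat.mul_le_mul hs3 hs3)
  have heq : 3 ^ m * 3 ^ m = 2 * x ^ 2 + 1 := by
    rw [← Nat.sub_add_cancel h9, h]
  suffices hm : m ≤ 1 by omega
  rcases Nat.even_or_odd m with hme | hmo
  · exfalso
    obtain ⟨n, rfl⟩ := hme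
    have hn3 : 3 ≤ 3 ^ n := by
      calc 3 = 3 ^ 1 := by norm_num
      _ ≤ 3 ^ n := Nat.pow_le_pow_right (by norm_num) (by omega)
    refine even_case (3 ^ n) x hn3 (Odd.pow ⟨1, by norm_num⟩) ?_
    rw [← pow_add]; exact heq
  · exact odd_case m x hmo heq
end

section
/- The only integers c ≥ 3 with c ≠ 6 such that the triples (2, 6, c), (3, 7, c+1) and (4, 8, c+2) are each multiplicatively dependent are c = 8 and c = 48. -/
/-!
A multiplicative relation `a ^ k₁ * b ^ k₂ * n ^ k₃ = 1` becomes, after taking `r`-adic valuations,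
the linear relation `k₁ v_r(a) + k₂ v_r(b) + k₃ v_r(n) = 0` for every prime `r`. As `2, 6` and
`3, 7` are multiplicatively independent, the exponent of the third entry is nonzero, so every prime
factor of `c` divides `2 * 6` and every prime factor of `c + 1` divides `3 * 7`. It remains to solve
`2 ^ x * 3 ^ y + 1 = 3 ^ z * 7 ^ w`. Divisibility by `3` and `7` reduces it to `2 ^ x + 1 = 3 ^ z`
or `2 ^ x * 3 ^ y + 1 = 7 ^ w`; in the latter `y = 1`, since `9 ∣ 7 ^ w - 1` forces
`19 ∣ 7 ^ w - 1`. In both remaining equations a congruence mod `4` makes the right side a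
square `m ^ 2`, so the left side is `(m - 1) * (m + 1)`. The factor `m + 1` is prime to `3`, hence a
power of `2`, and a congruence mod `8` resp. `16` bounds it. The solutions are `c ∈ {2, 6, 8, 48}`.
-/

/-- A triple of positive integers is multiplicatively dependent if some
nontrivial integer power product of its entries equals 1. -/
def MulDepTriple (a b c : ℕ) : Prop :=
  ∃ k₁ k₂ k₃ : ℤ, ¬(k₁ = 0 ∧ k₂ = 0 ∧ k₃ = 0) ∧
    (a : ℝ) ^ k₁ * (b : ℝ) ^ k₂ * (c : ℝ) ^ k₃ = 1

theorem padicValNat_combination_eq_zero_of_zpow_eq_one (p : ℕ) [Fact p.Prime] {a b n : ℕ}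
    (ha : a ≠ 0) (hb : b ≠ 0) (hn : n ≠ 0) {k₁ k₂ k₃ : ℤ}
    (h : (a : ℝ) ^ k₁ * (b : ℝ) ^ k₂ * (n : ℝ) ^ k₃ = 1) :
    k₁ * padicValNat p a + k₂ * padicValNat p b + k₃ * padicValNat p n = 0 := by
  have hℚ : (a : ℚ) ^ k₁ * (b : ℚ) ^ k₂ * (n : ℚ) ^ k₃ = 1 := by
    have : (((a : ℚ) ^ k₁ * (b : ℚ) ^ k₂ * (n : ℚ) ^ k₃ : ℚ) : ℝ) = ((1 : ℚ) : ℝ) := by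
      push_cast
      exact h
    exact_mod_cast this
  have := congrArg (padicValRat p) hℚ
  rwa [padicValRat.mul (by positivity) (by positivity), padicValRat.mul (by positivity)
    (by positivity), padicValRat.zpow, padicValRat.zpow, padicValRat.zpow, padicValRat.of_nat,
    padicValRat.of_nat, padicValRat.of_nat, padicValRat.one] at this

theorem MulDepTriple.primeFactors_subset {a b n : ℕ} (p q : ℕ) [Fact p.Prime] [Fact q.Prime]
    (ha : a ≠ 0) (hb : b ≠ 0) (hn : n ≠ 0)
    (hdet : padicValNat p a * padicValNat q b ≠ padicValNat q a * padicValNat p b)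
    (h : MulDepTriple a b n) : n.primeFactors ⊆ a.primeFactors ∪ b.primeFactors := by
  obtain ⟨k₁, k₂, k₃, hk, h⟩ := h
  -- Cramer's rule for the valuations at `p` and `q`: a relation without `n` is trivial.
  have hk₃ : k₃ ≠ 0 := by
    rintro rfl
    have hp := padicValNat_combination_eq_zero_of_zpow_eq_one p ha hb hn h
    have hq := padicValNat_combination_eq_zero_of_zpow_eq_one q ha hb hn h
    set D : ℤ := padicValNat p a * padicValNat q b - padicValNat q a * padicValNat p b
    have hD : D ≠ 0 := sub_ne_zero.2 (by exact_mod_cast hdet)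
    have h₁ : k₁ * D = 0 := by
      linear_combination (padicValNat q b : ℤ) * hp - (padicValNat p b : ℤ) * hq
    have h₂ : k₂ * D = 0 := by
      linear_combination (padicValNat p a : ℤ) * hq - (padicValNat q a : ℤ) * hp
    exact hk ⟨(mul_eq_zero.1 h₁).resolve_right hD, (mul_eq_zero.1 h₂).resolve_right hD, rfl⟩
  intro r hr
  by_contra hab
  have hr' := Nat.prime_of_mem_primeFactors hr
  have : Fact r.Prime := ⟨hr'⟩
  simp only [Finset.mem_union, Nat.mem_primeFactors, not_or, not_and] at hab
  have hrel := padicValNat_combination_eq_zero_of_zpow_eq_one r ha hb hn h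
  rw [padicValNat.eq_zero_of_not_dvd (hab.1 hr' · ha),
    padicValNat.eq_zero_of_not_dvd (hab.2 hr' · hb)] at hrel
  have hrn : padicValNat r n ≠ 0 :=
    Nat.one_le_iff_ne_zero.1 (one_le_padicValNat_of_dvd hn (Nat.dvd_of_mem_primeFactors hr))
  simp_all

theorem Nat.eq_pow_mul_pow_of_primeFactors_subset {p q n : ℕ} (hpq : p ≠ q) (hn : n ≠ 0)
    (h : n.primeFactors ⊆ {p, q}) :
    n = p ^ n.factorization p * q ^ n.factorization q := by
  conv_lhs => rw [← Nat.prod_factorization_pow_eq_self hn]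
  rw [Finsupp.prod_of_support_subset _ (Nat.support_factorization n ▸ h) _ (by simp),
    Finset.prod_pair hpq]

theorem Nat.pow_mod_eq_pow_mod_mod {a d n : ℕ} (h : a ^ d % n = 1) (x : ℕ) :
    a ^ x % n = a ^ (x % d) % n := by
  conv_lhs => rw [← Nat.div_add_mod x d, pow_add, pow_mul, Nat.mul_mod, Nat.pow_mod, h, one_pow,
    ← Nat.mul_mod, one_mul]

theorem Nat.add_one_dvd_of_add_one_eq_sq {m N : ℕ} (h : N + 1 = m ^ 2) : m + 1 ∣ N :=
  ⟨m - 1, by rw [← Nat.sq_sub_sq, ← h, one_pow, Nat.add_sub_cancel]⟩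

theorem not_seven_dvd_two_pow_add_one (x : ℕ) : ¬ 7 ∣ 2 ^ x + 1 := by
  have hx := Nat.pow_mod_eq_pow_mod_mod (a := 2) (d := 3) (n := 7) rfl x
  have : x % 3 < 3 := Nat.mod_lt _ (by norm_num)
  interval_cases x % 3 <;> omega

theorem two_pow_add_one_eq_three_pow {x z : ℕ} (h : 2 ^ x + 1 = 3 ^ z) : x = 1 ∨ x = 3 := by
  rcases Nat.lt_or_ge x 2 with hx | hx
  · have hodd : (2 ^ x + 1) % 2 = 1 := by rw [h, Nat.pow_mod]; norm_num
    interval_cases x <;> omega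
  have h4 : 4 ∣ 2 ^ x := pow_dvd_pow 2 hx
  obtain ⟨t, rfl⟩ : 2 ∣ z := by
    have h1 : 3 ^ z % 4 = 1 := by rw [← h]; omega
    have := Nat.pow_mod_eq_pow_mod_mod (a := 3) (d := 2) (n := 4) rfl z
    have : z % 2 < 2 := Nat.mod_lt _ (by norm_num)
    interval_cases hz : z % 2 <;> omega
  have hsq : 2 ^ x + 1 = (3 ^ t) ^ 2 := h.trans (pow_mul' 3 2 t)
  obtain ⟨s, -, hs⟩ := (Nat.dvd_prime_pow Nat.prime_two).1 (Nat.add_one_dvd_of_add_one_eq_sq hsq)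
  have h3t : 3 ^ t % 8 = 1 ∨ 3 ^ t % 8 = 3 := by
    have := Nat.pow_mod_eq_pow_mod_mod (a := 3) (d := 2) (n := 8) rfl t
    have : t % 2 < 2 := Nat.mod_lt _ (by norm_num)
    interval_cases t % 2 <;> omega
  generalize 3 ^ t = m at hsq hs h3t
  have hs3 : s < 3 := by
    by_contra! hs3
    have : 8 ∣ m + 1 := hs ▸ pow_dvd_pow 2 hs3
    omega
  have : m + 1 ≤ 4 := hs ▸ Nat.pow_le_pow_right two_pos (by omega : s ≤ 2)
  obtain rfl : m = 3 := by
    rcases (by omega : m = 1 ∨ m = 3) with rfl | rfl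
    · simp at hsq
    · rfl
  exact Or.inr (Nat.pow_right_injective le_rfl (by linarith : 2 ^ x = 2 ^ 3))

theorem three_mul_two_pow_add_one_eq_seven_pow {x w : ℕ} (h : 3 * 2 ^ x + 1 = 7 ^ w) :
    x = 1 ∨ x = 4 := by
  rcases Nat.lt_or_ge x 2 with hx | hx
  · have hodd : (3 * 2 ^ x + 1) % 2 = 1 := by rw [h, Nat.pow_mod]; norm_num
    interval_cases x <;> omega
  have h4 : 4 ∣ 2 ^ x := pow_dvd_pow 2 hx
  obtain ⟨u, rfl⟩ : 2 ∣ w := by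
    have h1 : 7 ^ w % 4 = 1 := by rw [← h]; omega
    have := Nat.pow_mod_eq_pow_mod_mod (a := 7) (d := 2) (n := 4) rfl w
    have : w % 2 < 2 := Nat.mod_lt _ (by norm_num)
    interval_cases hw : w % 2 <;> omega
  have hsq : 3 * 2 ^ x + 1 = (7 ^ u) ^ 2 := h.trans (pow_mul' 7 2 u)
  have h7u3 : 7 ^ u % 3 = 1 := by rw [Nat.pow_mod]; norm_num
  have h7u16 : 7 ^ u % 16 = 1 ∨ 7 ^ u % 16 = 7 := by
    have := Nat.pow_mod_eq_pow_mod_mod (a := 7) (d := 2) (n := 16) rfl u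
    have : u % 2 < 2 := Nat.mod_lt _ (by norm_num)
    interval_cases u % 2 <;> omega
  generalize 7 ^ u = m at hsq h7u3 h7u16
  have hcop : Nat.Coprime (m + 1) 3 :=
    ((Nat.Prime.coprime_iff_not_dvd Nat.prime_three).2 (by omega)).symm
  obtain ⟨s, -, hs⟩ := (Nat.dvd_prime_pow Nat.prime_two).1 <|
    hcop.dvd_of_dvd_mul_left (Nat.add_one_dvd_of_add_one_eq_sq hsq)
  have hs4 : s < 4 := by
    by_contra! hs4
    have : 16 ∣ m + 1 := hs ▸ pow_dvd_pow 2 hs4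
    omega
  have : m + 1 ≤ 8 := hs ▸ Nat.pow_le_pow_right two_pos (by omega : s ≤ 3)
  obtain rfl : m = 7 := by
    rcases (by omega : m = 1 ∨ m = 7) with rfl | rfl
    · simp at hsq
    · rfl
  exact Or.inr (Nat.pow_right_injective le_rfl (by linarith : 2 ^ x = 2 ^ 4))

theorem two_pow_mul_three_pow_add_one_ne_seven_pow {x y w : ℕ} (hy : 2 ≤ y) :
    2 ^ x * 3 ^ y + 1 ≠ 7 ^ w := by
  intro h
  -- `7` has order `3` both modulo `9` and modulo `19`.
  have h9 : 9 ∣ 2 ^ x * 3 ^ y := Dvd.dvd.mul_left (pow_dvd_pow 3 hy) _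
  have hw : w % 3 = 0 := by
    have h1 : 7 ^ w % 9 = 1 := by rw [← h]; omega
    have := Nat.pow_mod_eq_pow_mod_mod (a := 7) (d := 3) (n := 9) rfl w
    have : w % 3 < 3 := Nat.mod_lt _ (by norm_num)
    interval_cases w % 3 <;> omega
  have h19 : 19 ∣ 2 ^ x * 3 ^ y := by
    have h1 : 7 ^ w % 19 = 1 := by
      rw [Nat.pow_mod_eq_pow_mod_mod (a := 7) (d := 3) (n := 19) rfl, hw]
      rfl
    rw [← h] at h1
    omega
  have hcop : Nat.Coprime 19 (2 ^ x * 3 ^ y) :=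
    Nat.Coprime.mul_right (Nat.Coprime.pow_right _ (by norm_num))
      (Nat.Coprime.pow_right _ (by norm_num))
  exact absurd (hcop.eq_one_of_dvd h19) (by norm_num)

theorem two_pow_mul_three_pow_add_one_eq_three_pow_mul_seven_pow {x y z w : ℕ}
    (h : 2 ^ x * 3 ^ y + 1 = 3 ^ z * 7 ^ w) :
    2 ^ x * 3 ^ y = 2 ∨ 2 ^ x * 3 ^ y = 6 ∨ 2 ^ x * 3 ^ y = 8 ∨ 2 ^ x * 3 ^ y = 48 := by
  rcases Nat.eq_zero_or_pos y with rfl | hy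
  · simp only [pow_zero, mul_one] at h ⊢
    obtain rfl : w = 0 := by
      by_contra hw
      exact not_seven_dvd_two_pow_add_one x (h ▸ Dvd.dvd.mul_left (dvd_pow_self 7 hw) _)
    rw [pow_zero, mul_one] at h
    rcases two_pow_add_one_eq_three_pow h with rfl | rfl <;> norm_num
  · obtain rfl : z = 0 := by
      by_contra hz
      have : 3 ∣ 2 ^ x * 3 ^ y := dvd_mul_of_dvd_right (dvd_pow_self 3 hy.ne') _
      have : 3 ∣ 3 ^ z * 7 ^ w := dvd_mul_of_dvd_left (dvd_pow_self 3 hz) _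
      omega
    obtain rfl : y = 1 := by
      by_contra hy1
      exact two_pow_mul_three_pow_add_one_ne_seven_pow (by omega : 2 ≤ y) (by simpa using h)
    rcases three_mul_two_pow_add_one_eq_seven_pow (by simpa [mul_comm] using h) with rfl | rfl <;>
      norm_num

theorem stmt9_general (c : ℕ) (hc : 3 ≤ c) (hc6 : c ≠ 6)
    (h1 : MulDepTriple 2 6 c) (h2 : MulDepTriple 3 7 (c + 1)) : c = 8 ∨ c = 48 := by
  have hp7 : Nat.Prime 7 := by norm_num
  have : Fact (Nat.Prime 7) := ⟨hp7⟩
  have h₂₃ : c.primeFactors ⊆ {2, 3} := by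
    have := h1.primeFactors_subset 2 3 two_ne_zero (by norm_num) (by omega)
      (by simp [padicValNat_primes])
    rwa [show (6 : ℕ) = 2 * 3 from rfl, Nat.primeFactors_mul two_ne_zero three_ne_zero,
      Nat.prime_two.primeFactors, Nat.prime_three.primeFactors, ← Finset.union_assoc,
      Finset.union_self] at this
  have h₃₇ : (c + 1).primeFactors ⊆ {3, 7} := by
    have := h2.primeFactors_subset 3 7 three_ne_zero (by norm_num) (by omega)
      (by simp [padicValNat_primes])
    rwa [Nat.prime_three.primeFactors, hp7.primeFactors] at this
  obtain ⟨x, y, hxy⟩ : ∃ x y, c = 2 ^ x * 3 ^ y :=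
    ⟨_, _, Nat.eq_pow_mul_pow_of_primeFactors_subset (by norm_num) (by omega) h₂₃⟩
  obtain ⟨z, w, hzw⟩ : ∃ z w, c + 1 = 3 ^ z * 7 ^ w :=
    ⟨_, _, Nat.eq_pow_mul_pow_of_primeFactors_subset (by norm_num) (by omega) h₃₇⟩
  have := two_pow_mul_three_pow_add_one_eq_three_pow_mul_seven_pow (hxy ▸ hzw)
  omega

theorem stmt9 (c : ℕ) (hc : 3 ≤ c) (hc6 : c ≠ 6)
    (h1 : MulDepTriple 2 6 c) (h2 : MulDepTriple 3 7 (c + 1))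
    (h3 : MulDepTriple 4 8 (c + 2)) : c = 8 ∨ c = 48 :=
  stmt9_general c hc hc6 h1 h2
end

section
/- The equation ((d^x + 1)^s + 1)^t - d^y = 2 has no solution in integers d, x, y, s, t with x ≥ 1 and d, s, t, y all at least 2. -/
/-- For odd exponent, `d^n + 1` factors as `(d+1) * T` with `T` odd (for odd `d`). -/
lemma cof_aux (d : ℕ) (hd : Odd d) (k : ℕ) :
    ∃ T : ℕ, Odd T ∧ d ^ (2 * k + 1) + 1 = (d + 1) * T := by
  induction k with
  | zero => exact ⟨1, odd_one, by ring⟩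
  | succ k ih =>
    obtain ⟨T, hT, hTe⟩ := ih
    have hd1 : 1 ≤ d := hd.pos
    have hT1 : 1 ≤ T := hT.pos
    have hle : d - 1 ≤ d ^ 2 * T := by
      have h1 : d ≤ d ^ 2 := Nat.le_self_pow two_ne_zero d
      have h2 : d ^ 2 * 1 ≤ d ^ 2 * T := Nat.mul_le_mul_left _ hT1
      omega
    refine ⟨d ^ 2 * T - (d - 1), ?_, ?_⟩
    · exact Nat.Odd.sub_even hle ((hd.pow).mul hT)
        (by obtain ⟨j, hj⟩ := hd; exact ⟨j, by omega⟩)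
    · have hTe' : (d : ℤ) ^ (2 * k + 1) + 1 = (d + 1) * T := by exact_mod_cast hTe
      zify [hle, hd1]
      linear_combination (d : ℤ) ^ 2 * hTe'

theorem stmt10 (d x y s t : ℕ) (hx : 1 ≤ x) (hd : 2 ≤ d) (hs : 2 ≤ s)
    (ht : 2 ≤ t) (hy : 2 ≤ y) :
    ((d ^ x + 1) ^ s + 1) ^ t ≠ d ^ y + 2 := by
  intro h
  set m : ℕ := d ^ x + 1 with hm
  have hdx1 : 1 ≤ d ^ x := Nat.one_le_pow _ _ (by omega)
  rcases Nat.even_or_odd d with hde | hdo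
  · -- d even: mod 4 contradiction
    obtain ⟨j, hj⟩ := hde
    have hAodd : Odd (d ^ x) → False := by
      intro hA
      have : Even (d ^ x) := (even_iff_two_dvd).mpr (dvd_pow ⟨j, by omega⟩ (by omega))
      exact (Nat.not_odd_iff_even.mpr this) hA
    have hAe : Even (d ^ x) := (even_iff_two_dvd).mpr (dvd_pow ⟨j, by omega⟩ (by omega))
    have hmodd : Odd m := by
      obtain ⟨a, ha⟩ := hAe; exact ⟨a, by omega⟩
    have hNeven : 2 ∣ m ^ s + 1 := by
      obtain ⟨a, ha⟩ := hmodd.pow (n := s); omega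
    have h4L : 4 ∣ (m ^ s + 1) ^ t := by
      obtain ⟨k, hk⟩ := hNeven
      have : (m ^ s + 1) ^ t = (m ^ s + 1) ^ 2 * (m ^ s + 1) ^ (t - 2) := by
        rw [← pow_add]; congr 1; omega
      rw [this, hk]
      exact Dvd.dvd.mul_right ⟨k ^ 2, by ring⟩ _
    have h4d : 4 ∣ d ^ y := by
      have : d ^ y = d ^ 2 * d ^ (y - 2) := by rw [← pow_add]; congr 1; omega
      rw [this, hj]
      exact Dvd.dvd.mul_right ⟨j ^ 2, by ring⟩ _
    rw [h] at h4L
    omega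
  · -- d odd
    have hd3 : 3 ≤ d := by obtain ⟨j, hj⟩ := hdo; omega
    have hmeven : Even m := by obtain ⟨a, ha⟩ := hdo.pow (n := x); exact ⟨a + 1, by omega⟩
    -- m^2 ∣ d^y + 1
    have hdvd : m ^ 2 ∣ d ^ y + 1 := by
      have h1 : m ^ s ∣ (m ^ s + 1) ^ t - 1 := by
        have := Nat.sub_dvd_pow_sub_pow (m ^ s + 1) 1 t
        simpa using this
      rw [h] at h1
      have h2 : d ^ y + 2 - 1 = d ^ y + 1 := by omega
      rw [h2] at h1
      exact dvd_trans (pow_dvd_pow m hs) h1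
    have h4dvd : 4 ∣ d ^ y + 1 := by
      refine dvd_trans ?_ hdvd
      obtain ⟨a, ha⟩ := hmeven
      exact ⟨a * a, by rw [ha]; ring⟩
    -- y is odd
    have hyodd : Odd y := by
      by_contra hye
      rw [Nat.not_odd_iff_even] at hye
      obtain ⟨b, hb⟩ := hye
      obtain ⟨c, hc⟩ := hdo.pow (n := b)
      have hsq : d ^ y = 4 * (c * c + c) + 1 := by
        have h5 : d ^ y = (2 * c + 1) ^ 2 := by rw [hb, ← hc, ← pow_mul]; congr 1; omega
        rw [h5]; ring
      set q := c * c + c with hq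
      omega
    -- y > x from size considerations
    have hxy : x < y := by
      have h1 : m ^ 2 + 1 ≤ m ^ s + 1 := by
        have := Nat.pow_le_pow_right (show 1 ≤ m by omega) hs; omega
      have h2 : m ^ s + 1 ≤ (m ^ s + 1) ^ t := Nat.le_self_pow (by omega) _
      have h3 : m ^ 2 = d ^ x * d ^ x + 2 * d ^ x + 1 := by rw [hm]; ring
      have h4 : d ^ x < d ^ y := by omega
      exact (Nat.pow_lt_pow_iff_right (by omega)).mp h4
    rcases Nat.even_or_odd x with hxe | hxo
    · -- x even: order argument in ZMod m
      haveI : NeZero m := ⟨by omega⟩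
      have hmx : ((d : ZMod m)) ^ x = -1 := by
        have h0 : ((m : ℕ) : ZMod m) = 0 := ZMod.natCast_self m
        rw [hm] at h0
        push_cast at h0
        linear_combination h0
      have hmd : m ∣ d ^ y + 1 := dvd_trans (dvd_pow_self m (by omega)) hdvd
      have hmy : ((d : ZMod m)) ^ y = -1 := by
        have h0 : (((d ^ y + 1 : ℕ)) : ZMod m) = 0 :=
          (ZMod.natCast_eq_zero_iff _ _).mpr hmd
        push_cast at h0
        linear_combination h0
      set e : ℕ := y - x with he
      have hye2 : y = x + e := by omega
      have hee : ((d : ZMod m)) ^ e = 1 := by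
        have h5 : (d : ZMod m) ^ x * (d : ZMod m) ^ e = (d : ZMod m) ^ y := by
          rw [← pow_add, ← hye2]
        rw [hmx, hmy, neg_one_mul] at h5
        exact neg_inj.mp h5
      have h2x : ((d : ZMod m)) ^ (2 * x) = 1 := by
        rw [two_mul, pow_add, hmx]; ring
      have hk1 : orderOf ((d : ZMod m)) ∣ e := orderOf_dvd_of_pow_eq_one hee
      have hk2 : orderOf ((d : ZMod m)) ∣ 2 * x := orderOf_dvd_of_pow_eq_one h2x
      have heodd : Odd e := by
        obtain ⟨a, ha⟩ := hxe; obtain ⟨b, hb⟩ := hyodd; exact ⟨b - a, by omega⟩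
      have hkodd : Odd (orderOf ((d : ZMod m))) := by
        rcases Nat.even_or_odd (orderOf ((d : ZMod m))) with hke | hko
        · exfalso
          have h2e : 2 ∣ e := dvd_trans hke.two_dvd hk1
          obtain ⟨c, hc⟩ := heodd
          omega
        · exact hko
      have hkx : orderOf ((d : ZMod m)) ∣ x :=
        (Nat.Coprime.dvd_of_dvd_mul_left (hkodd.coprime_two_right) hk2)
      have hx1 : ((d : ZMod m)) ^ x = 1 := orderOf_dvd_iff_pow_eq_one.mp hkx
      rw [hx1] at hmx
      have h20 : ((2 : ℕ) : ZMod m) = 0 := by push_cast; linear_combination hmx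
      have hm2 : m ∣ 2 := (ZMod.natCast_eq_zero_iff _ _).mp h20
      have hle2 : m ≤ 2 := Nat.le_of_dvd (by omega) hm2
      rw [hm] at hle2
      have hdx3 : d ≤ d ^ x := Nat.le_self_pow (by omega) d
      omega
    · -- x odd: 2-adic valuation argument via explicit factorization
      obtain ⟨a, ha⟩ := hxo
      obtain ⟨b, hb⟩ := hyodd
      obtain ⟨Tx, hTxo, hTx⟩ := cof_aux d hdo a
      obtain ⟨Ty, hTyo, hTy⟩ := cof_aux d hdo b
      rw [← ha] at hTx
      rw [← hb] at hTy
      have hdvd2 : (d + 1) * ((d + 1) * Tx ^ 2) ∣ (d + 1) * Ty := by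
        have h1 : m ^ 2 = (d + 1) * ((d + 1) * Tx ^ 2) := by rw [hm, hTx]; ring
        rw [← h1, ← hTy]
        exact hdvd
      have h2 : (d + 1) * Tx ^ 2 ∣ Ty :=
        (Nat.mul_dvd_mul_iff_left (show 0 < d + 1 by omega)).mp hdvd2
      have h3 : 2 ∣ Ty := by
        obtain ⟨c, hc⟩ := h2
        obtain ⟨j, hj⟩ := hdo
        exact ⟨(j + 1) * Tx ^ 2 * c, by rw [hc, hj]; ring⟩
      obtain ⟨c, hc⟩ := hTyo
      omega
end

section
/- If d, x, y, s, t are integers with x ≥ 1, d, y, s, t ≥ 2, d odd, y odd, and t odd, satisfying d^y - ((d^x - 1)^s - 1)^t = 2, then a contradiction follows; i.e., there is no such solution with y odd. -/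
open Finset

private lemma natGeom (d n : ℕ) (hd : 1 ≤ d) :
    d ^ n - 1 = (d - 1) * ∑ i ∈ Finset.range n, d ^ i := by
  have h := geom_sum_mul (d : ℤ) n
  have h1 : 1 ≤ d ^ n := Nat.one_le_pow _ _ hd
  zify [hd, h1]
  push_cast at h ⊢
  linarith

private lemma castOfOdd {n : ℕ} (hn : Odd n) : ((n : ZMod 2)) = 1 := by
  rw [show ((n : ZMod 2)) = ((n % 2 : ℕ) : ZMod 2) from (ZMod.natCast_mod n 2).symm,
    Nat.odd_iff.mp hn]
  norm_num

private lemma oddOfCast {n : ℕ} (h : (n : ZMod 2) = 1) : Odd n := by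
  rw [Nat.odd_iff]
  by_contra h'
  have h2 : 2 ∣ n := by omega
  rw [← ZMod.natCast_eq_zero_iff] at h2
  rw [h] at h2
  exact one_ne_zero h2

set_option maxHeartbeats 1000000 in
theorem stmt11 (d x y s t : ℕ) (hx : 1 ≤ x) (hd : 2 ≤ d) (hy : 2 ≤ y)
    (hs : 2 ≤ s) (ht : 2 ≤ t) (hdo : Odd d) (hyo : Odd y) (hto : Odd t)
    (h : d ^ y - ((d ^ x - 1) ^ s - 1) ^ t = 2) : False := by
  have hd3 : 3 ≤ d := by rcases hdo with ⟨k, hk⟩; omega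
  have hdxle : d ≤ d ^ x := Nat.le_self_pow (by omega) d
  have hdx2 : 2 ≤ d ^ x - 1 := by omega
  set Dx := d ^ x - 1 with hDx
  set m := Dx ^ s - 1 with hm
  have hDxs4 : 4 ≤ Dx ^ s := le_trans (by norm_num : (4:ℕ) ≤ 2 ^ 2)
    (le_trans (Nat.pow_le_pow_right (by norm_num) hs) (Nat.pow_le_pow_left hdx2 s))
  have hm3 : 3 ≤ m := by omega
  have hN : d ^ y - 1 = m ^ t + 1 := by
    have := Nat.one_le_pow y d (by omega)
    omega
  -- m is odd
  have hDxeven : 2 ∣ Dx := by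
    have : Odd (d ^ x) := hdo.pow
    rw [Nat.odd_iff] at this; omega
  have hDxseven : 2 ∣ Dx ^ s := hDxeven.trans (dvd_pow_self Dx (by omega))
  have hmodd : Odd m := by rw [Nat.odd_iff]; omega
  -- N = (d-1) * S with S odd
  set S := ∑ i ∈ Finset.range y, d ^ i with hS
  have hA : d ^ y - 1 = (d - 1) * S := natGeom d y (by omega)
  have hSodd : Odd S := by
    apply oddOfCast
    rw [hS]
    push_cast
    rw [Finset.sum_congr rfl (fun i _ => by rw [castOfOdd hdo, one_pow])]
    simp only [Finset.sum_const, Finset.card_range, nsmul_eq_mul, mul_one]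
    exact castOfOdd hyo
  -- m^t + 1 = Dx^s * K' with K' odd
  set K : ℤ := ∑ i ∈ Finset.range t, (m : ℤ) ^ i * (-1) ^ (t - 1 - i) with hK
  have hB : (m : ℤ) ^ t + 1 = ((m : ℤ) + 1) * K := by
    have h2 := geom_sum₂_mul (m : ℤ) (-1) t
    rw [hto.neg_one_pow] at h2
    rw [hK]
    linear_combination -h2
  have hKcast : ((K : ℤ) : ZMod 2) = 1 := by
    have key : ∀ i ∈ Finset.range t, ((m : ZMod 2)) ^ i * (-1) ^ (t - 1 - i) = 1 := by
      intro i _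
      rw [castOfOdd hmodd, show ((-1 : ZMod 2)) = 1 from by decide, one_pow, one_pow, one_mul]
    rw [hK]
    push_cast
    rw [Finset.sum_congr rfl key]
    simp only [Finset.sum_const, Finset.card_range, nsmul_eq_mul, mul_one]
    exact castOfOdd hto
  have hKpos : 0 < K := by
    have hmt : (0:ℤ) < (m:ℤ) ^ t + 1 := by positivity
    nlinarith [hB, (by positivity : (0:ℤ) < (m:ℤ) + 1)]
  set K' : ℕ := K.toNat with hK'
  have hKK' : (K' : ℤ) = K := Int.toNat_of_nonneg hKpos.le
  have hB' : m ^ t + 1 = Dx ^ s * K' := by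
    have hmDx : (m : ℤ) + 1 = (Dx : ℤ) ^ s := by
      have h1 : 1 ≤ Dx ^ s := by omega
      push_cast [hm, h1]
      ring
    have h3 := hB
    rw [hmDx, ← hKK'] at h3
    exact_mod_cast h3
  have hK'odd : Odd K' := by
    apply oddOfCast
    rw [show ((K' : ZMod 2)) = ((K' : ℤ) : ZMod 2) from by push_cast; ring, hKK', hKcast]
  -- compare 2-adic valuations
  have hd1ne : d - 1 ≠ 0 := by omega
  have hSmod := Nat.odd_iff.mp hSodd
  have hK'mod := Nat.odd_iff.mp hK'odd
  have hSne : S ≠ 0 := by omega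
  have hK'ne : K' ≠ 0 := by omega
  have hDxne : Dx ≠ 0 := by omega
  have hNeq : (d - 1) * S = Dx ^ s * K' := by omega
  have hSnd : ¬ 2 ∣ S := by omega
  have hK'nd : ¬ 2 ∣ K' := by omega
  have hf1 : ((d - 1) * S).factorization 2 = (d - 1).factorization 2 := by
    rw [Nat.factorization_mul hd1ne hSne]
    simp [Nat.factorization_eq_zero_of_not_dvd hSnd]
  have hf2 : (Dx ^ s * K').factorization 2 = s * Dx.factorization 2 := by
    rw [Nat.factorization_mul (pow_ne_zero s hDxne) hK'ne, Nat.factorization_pow]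
    simp [Nat.factorization_eq_zero_of_not_dvd hK'nd]
  have hmain : (d - 1).factorization 2 = s * Dx.factorization 2 := by
    rw [← hf1, hNeq, hf2]
  have hdmod := Nat.odd_iff.mp hdo
  have ha1 : 1 ≤ (d - 1).factorization 2 :=
    Nat.Prime.factorization_pos_of_dvd Nat.prime_two hd1ne (by omega)
  have hba : (d - 1).factorization 2 ≤ Dx.factorization 2 := by
    rw [← Nat.Prime.pow_dvd_iff_le_factorization Nat.prime_two hDxne]
    exact dvd_trans (Nat.ordProj_dvd (d - 1) 2)
      (by simpa using Nat.sub_dvd_pow_sub_pow d 1 x)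
  nlinarith [hmain, ha1, hba, hs]
end

section
/- For w ≥ 1, the only solutions of the equation 7^w - 1 = 2^x * 3^y in nonnegative integers are (w, x, y) = (1, 1, 1) and (2, 4, 1). -/
lemma cycle_lemma (n d m w : ℕ) (hd : 0 < d) (hpow : m ^ d ≡ 1 [MOD n])
    (hw : m ^ w ≡ 1 [MOD n]) : m ^ (w % d) ≡ 1 [MOD n] := by
  have hsplit : m ^ w = (m ^ d) ^ (w / d) * m ^ (w % d) := by
    rw [← pow_mul, ← pow_add]
    congr 1
    exact (Nat.div_add_mod w d).symm
  have h1 : (m ^ d) ^ (w / d) ≡ 1 [MOD n] := by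
    simpa using hpow.pow (w / d)
  calc m ^ (w % d) ≡ (m ^ d) ^ (w / d) * m ^ (w % d) [MOD n] := by
        simpa using (h1.mul (Nat.ModEq.refl (m ^ (w % d)))).symm
    _ = m ^ w := hsplit.symm
    _ ≡ 1 [MOD n] := hw

theorem stmt13 (w x y : ℕ) (hw : 1 ≤ w) (h : 7 ^ w - 1 = 2 ^ x * 3 ^ y) :
    (w = 1 ∧ x = 1 ∧ y = 1) ∨ (w = 2 ∧ x = 4 ∧ y = 1) := by
  have h7 : 1 ≤ 7 ^ w := Nat.one_le_pow _ _ (by norm_num)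
  have heq : 7 ^ w = 2 ^ x * 3 ^ y + 1 := by omega
  -- helper: divides n → 7^w ≡ 1 mod n
  have hmod : ∀ n : ℕ, n ∣ 2 ^ x * 3 ^ y → 7 ^ w ≡ 1 [MOD n] := by
    intro n hn
    have : 7 ^ w - 1 ≡ 0 [MOD n] := (Nat.modEq_zero_iff_dvd).2 (h ▸ hn)
    have := this.add_right 1
    simpa [Nat.sub_add_cancel h7] using this
  -- y ≤ 1
  have hy1 : y ≤ 1 := by
    by_contra hy
    push_neg at hy
    have h9 : (9 : ℕ) ∣ 2 ^ x * 3 ^ y := by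
      have : (9 : ℕ) ∣ 3 ^ y := by
        have : (3:ℕ)^2 ∣ 3 ^ y := pow_dvd_pow 3 (by omega)
        simpa using this
      exact this.mul_left _
    have h1 : 7 ^ w ≡ 1 [MOD 9] := hmod 9 h9
    have hc : 7 ^ (w % 3) ≡ 1 [MOD 9] :=
      cycle_lemma 9 3 7 w (by norm_num) (by decide) h1
    have hr : w % 3 < 3 := Nat.mod_lt _ (by norm_num)
    have h3w : 3 ∣ w := by
      interval_cases hh : (w % 3)
      · omega
      · exact absurd hc (by decide)
      · exact absurd hc (by decide)
    -- 19 ∣ 7^w - 1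
    obtain ⟨k, hk⟩ := h3w
    have h19 : (19 : ℕ) ∣ 7 ^ w - 1 := by
      have : (7:ℕ) ^ 3 - 1 ∣ (7 ^ 3) ^ k - 1 ^ k := Nat.sub_dvd_pow_sub_pow _ _ _
      have h342 : (342 : ℕ) ∣ 7 ^ w - 1 := by
        rw [hk, pow_mul]; simpa using this
      exact dvd_trans (by norm_num) h342
    rw [h] at h19
    have hp : Nat.Prime 19 := by norm_num
    rcases (hp.dvd_mul.1 h19) with h' | h'
    · have := hp.dvd_of_dvd_pow h'
      omega
    · have := hp.dvd_of_dvd_pow h'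
      omega
  -- y ≥ 1
  have hy0 : 1 ≤ y := by
    by_contra hy
    push_neg at hy
    interval_cases y
    have h3 : (3 : ℕ) ∣ 7 ^ w - 1 := by
      have : (7:ℕ) - 1 ∣ 7 ^ w - 1 ^ w := Nat.sub_dvd_pow_sub_pow _ _ _
      have h6 : (6:ℕ) ∣ 7 ^ w - 1 := by simpa using this
      exact dvd_trans (by norm_num) h6
    rw [h] at h3
    have hp : Nat.Prime 3 := by norm_num
    have := hp.dvd_of_dvd_pow (by simpa using h3)
    omega
  have hy : y = 1 := by omega
  -- x ≤ 4
  have hx4 : x ≤ 4 := by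
    by_contra hx
    push_neg at hx
    have h32 : (32 : ℕ) ∣ 2 ^ x * 3 ^ y := by
      have : (2:ℕ)^5 ∣ 2 ^ x := pow_dvd_pow 2 (by omega)
      exact dvd_trans (by norm_num) (this.mul_right _)
    have h1 : 7 ^ w ≡ 1 [MOD 32] := hmod 32 h32
    have hc : 7 ^ (w % 4) ≡ 1 [MOD 32] :=
      cycle_lemma 32 4 7 w (by norm_num) (by decide) h1
    have hr : w % 4 < 4 := Nat.mod_lt _ (by norm_num)
    have h4w : 4 ∣ w := by
      interval_cases hh : (w % 4)
      · omega
      · exact absurd hc (by decide)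
      · exact absurd hc (by decide)
      · exact absurd hc (by decide)
    obtain ⟨k, hk⟩ := h4w
    have h5 : (5 : ℕ) ∣ 7 ^ w - 1 := by
      have : (7:ℕ) ^ 4 - 1 ∣ (7 ^ 4) ^ k - 1 ^ k := Nat.sub_dvd_pow_sub_pow _ _ _
      have h2400 : (2400 : ℕ) ∣ 7 ^ w - 1 := by
        rw [hk, pow_mul]; simpa using this
      exact dvd_trans (by norm_num) h2400
    rw [h] at h5
    have hp : Nat.Prime 5 := by norm_num
    rcases (hp.dvd_mul.1 h5) with h' | h'
    · have := hp.dvd_of_dvd_pow h'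
      omega
    · have := hp.dvd_of_dvd_pow h'
      omega
  -- now bound w
  have hw2 : w ≤ 2 := by
    by_contra hww
    push_neg at hww
    have : (7:ℕ) ^ 3 ≤ 7 ^ w := Nat.pow_le_pow_right (by norm_num) (by omega)
    have hx16 : (2:ℕ) ^ x ≤ 16 := by
      calc (2:ℕ) ^ x ≤ 2 ^ 4 := Nat.pow_le_pow_right (by norm_num) hx4
        _ = 16 := by norm_num
    rw [hy] at heq
    norm_num at this heq
    omega
  subst hy
  interval_cases w
  · interval_cases x <;> simp_all <;> omega
  · interval_cases x <;> simp_all <;> omega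
end

section
/- If d, x, y, s, m are integers with x, y ≥ 1, d, s, m ≥ 2, d odd, m odd, and y < x, then the equation (d^x + 1)^s - (d^y - 1)^m = 2 has no solution. -/
theorem stmt15 (d x y s m : ℕ) (hx : 1 ≤ x) (hy : 1 ≤ y) (hd : 2 ≤ d)
    (hs : 2 ≤ s) (hm : 2 ≤ m) (hdo : Odd d) (hmo : Odd m) (hyx : y < x)
    (h : (d ^ x + 1) ^ s - (d ^ y - 1) ^ m = 2) : False := by
  obtain ⟨a, ha⟩ := hdo.pow (n := x)
  obtain ⟨b, hb⟩ := hdo.pow (n := y)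
  have h4 : (4:ℕ) = 2^2 := rfl
  have h4A : 4 ∣ (d ^ x + 1) ^ s := by
    have e : d ^ x + 1 = 2 * (a + 1) := by omega
    rw [e, mul_pow]
    exact dvd_mul_of_dvd_left (h4 ▸ pow_dvd_pow 2 hs) _
  have h4B : 4 ∣ (d ^ y - 1) ^ m := by
    have e : d ^ y - 1 = 2 * b := by omega
    rw [e, mul_pow]
    exact dvd_mul_of_dvd_left (h4 ▸ pow_dvd_pow 2 hm) _
  omega
end

section
/- The only solutions to the equation 2^y + 1 = 3^r * (2^(x+1) - 1)^w in integers x ≥ 3, y ≥ 1, w ≥ 0 and nonnegative r are (y, w, r) = (1, 0, 1) and (y, w, r) = (3, 0, 2); additionally, allowing r to be a negative integer (interpreting 3^r as dividing out powers of 3), the equation 3 * (2^y + 1) = (2^(x+1) - 1)^w has the unique solution (x, y, w) = (3, 2, 1). -/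
private lemma pow_period (a d m k : ℕ) (h : a ^ d ≡ 1 [MOD m]) :
    a ^ k ≡ a ^ (k % d) [MOD m] := by
  conv_lhs => rw [← Nat.div_add_mod k d]
  rw [pow_add, pow_mul]
  calc (a ^ d) ^ (k / d) * a ^ (k % d)
      ≡ 1 ^ (k / d) * a ^ (k % d) [MOD m] := (h.pow _).mul (Nat.ModEq.refl _)
    _ = a ^ (k % d) := by rw [one_pow, one_mul]

private lemma lemA (n y : ℕ) (hn : 4 ≤ n) (h : (2 ^ n - 1) ∣ 2 ^ y + 1) : False := by
  have h8 : 8 ≤ 2 ^ (n - 1) := by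
    calc (8:ℕ) = 2 ^ 3 := by norm_num
    _ ≤ 2 ^ (n - 1) := Nat.pow_le_pow_right (by norm_num) (by omega)
  have hpow : 2 ^ n = 2 * 2 ^ (n - 1) := by
    rw [← pow_succ']; congr 1; omega
  have hmod : 2 ^ n ≡ 1 [MOD 2 ^ n - 1] :=
    ((Nat.modEq_iff_dvd' (Nat.one_le_two_pow)).2 (dvd_refl _)).symm
  have hy : 2 ^ y ≡ 2 ^ (y % n) [MOD 2 ^ n - 1] := pow_period 2 n _ y hmod
  have h0 : 2 ^ y + 1 ≡ 0 [MOD 2 ^ n - 1] := (Nat.modEq_zero_iff_dvd).2 h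
  have h0' : 2 ^ (y % n) + 1 ≡ 0 [MOD 2 ^ n - 1] := ((hy.add_right 1).symm).trans h0
  have hdvd : (2 ^ n - 1) ∣ 2 ^ (y % n) + 1 := (Nat.modEq_zero_iff_dvd).1 h0'
  have hle : 2 ^ n - 1 ≤ 2 ^ (y % n) + 1 := Nat.le_of_dvd (by positivity) hdvd
  have hsm : 2 ^ (y % n) ≤ 2 ^ (n - 1) :=
    Nat.pow_le_pow_right (by norm_num)
      (by have := Nat.mod_lt y (show 0 < n by omega); omega)
  omega

private lemma lemB (y r : ℕ) (hy : 1 ≤ y) (h : 2 ^ y + 1 = 3 ^ r) :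
    (y = 1 ∧ r = 1) ∨ (y = 3 ∧ r = 2) := by
  by_cases hy4 : 4 ≤ y
  · exfalso
    have h16 : 2 ^ y % 16 = 0 := by
      have h1 : (2:ℕ) ^ 4 ∣ 2 ^ y := pow_dvd_pow 2 hy4
      have h2 : (16:ℕ) ∣ 2 ^ y := by norm_num at h1; exact h1
      omega
    have h3_16 : 3 ^ r % 16 = 3 ^ (r % 4) % 16 := pow_period 3 4 16 r (by decide)
    have e2 : 3 ^ (r % 4) % 16 = 1 := by omega
    have hr4 : r % 4 = 0 := by
      have hlt : r % 4 < 4 := Nat.mod_lt _ (by norm_num)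
      interval_cases h : (r % 4) <;> simp_all
    have h3_5 : 3 ^ r % 5 = 3 ^ (r % 4) % 5 := pow_period 3 4 5 r (by decide)
    rw [hr4] at h3_5
    norm_num at h3_5
    have h2_5 : 2 ^ y % 5 = 2 ^ (y % 4) % 5 := pow_period 2 4 5 y (by decide)
    have hlt : y % 4 < 4 := Nat.mod_lt _ (by norm_num)
    interval_cases h : (y % 4) <;> simp_all <;> omega
  · interval_cases y
    · left
      refine ⟨rfl, ?_⟩
      have hr : r < 2 := by
        by_contra hc
        push_neg at hc
        have : (3:ℕ) ^ 2 ≤ 3 ^ r := Nat.pow_le_pow_right (by norm_num) hc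
        norm_num at this h
        omega
      interval_cases r <;> first | rfl | norm_num at h
    · exfalso
      have hr : r < 2 := by
        by_contra hc
        push_neg at hc
        have : (3:ℕ) ^ 2 ≤ 3 ^ r := Nat.pow_le_pow_right (by norm_num) hc
        norm_num at this h
        omega
      interval_cases r <;> norm_num at h
    · right
      refine ⟨rfl, ?_⟩
      have hr : r < 3 := by
        by_contra hc
        push_neg at hc
        have : (3:ℕ) ^ 3 ≤ 3 ^ r := Nat.pow_le_pow_right (by norm_num) hc
        norm_num at this h
        omega
      interval_cases r <;> first | rfl | norm_num at h

private lemma lemC (N : ℕ) (hN : 2 ≤ N) (w : ℕ) :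
    (N - 1) ^ w ≡ 1 [MOD N] ∨ (N - 1) ^ w ≡ N - 1 [MOD N] := by
  have hsq : (N - 1) * (N - 1) ≡ 1 [MOD N] := by
    obtain ⟨k, rfl⟩ : ∃ k, N = k + 2 := ⟨N - 2, by omega⟩
    show ((k + 1) * (k + 1)) % (k + 2) = 1 % (k + 2)
    have he : (k + 1) * (k + 1) = 1 + (k + 2) * k := by ring
    rw [he, Nat.add_mul_mod_self_left]
  induction w with
  | zero => left; simp [Nat.ModEq.refl]
  | succ k ih =>
    rcases ih with hh | hh
    · right
      rw [pow_succ]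
      calc (N - 1) ^ k * (N - 1) ≡ 1 * (N - 1) [MOD N] := hh.mul_right _
        _ = N - 1 := one_mul _
    · left
      rw [pow_succ]
      calc (N - 1) ^ k * (N - 1) ≡ (N - 1) * (N - 1) [MOD N] := hh.mul_right _
        _ ≡ 1 [MOD N] := hsq

theorem stmt17 :
    (∀ x y w r : ℕ, 3 ≤ x → 1 ≤ y →
      2 ^ y + 1 = 3 ^ r * (2 ^ (x + 1) - 1) ^ w →
      (y = 1 ∧ w = 0 ∧ r = 1) ∨ (y = 3 ∧ w = 0 ∧ r = 2)) ∧
    (∀ x y w : ℕ, 3 ≤ x → 1 ≤ y →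
      3 * (2 ^ y + 1) = (2 ^ (x + 1) - 1) ^ w →
      x = 3 ∧ y = 2 ∧ w = 1) := by
  constructor
  · intro x y w r hx hy h
    have hn : 4 ≤ x + 1 := by omega
    have hw0 : w = 0 := by
      by_contra hw
      apply lemA (x + 1) y hn
      have hd : (2 ^ (x + 1) - 1) ∣ 3 ^ r * (2 ^ (x + 1) - 1) ^ w :=
        Dvd.dvd.mul_left (dvd_pow_self _ hw) _
      rw [← h] at hd
      exact hd
    subst hw0
    rw [pow_zero, mul_one] at h
    rcases lemB y r hy h with ⟨h1, h2⟩ | ⟨h1, h2⟩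
    · exact Or.inl ⟨h1, rfl, h2⟩
    · exact Or.inr ⟨h1, rfl, h2⟩
  · intro x y w hx hy h
    have hn : 4 ≤ x + 1 := by omega
    set n := x + 1 with hn_def
    have h8 : 8 ≤ 2 ^ (n - 1) := by
      calc (8:ℕ) = 2 ^ 3 := by norm_num
      _ ≤ 2 ^ (n - 1) := Nat.pow_le_pow_right (by norm_num) (by omega)
    have hpow : 2 ^ n = 2 * 2 ^ (n - 1) := by
      rw [← pow_succ']; congr 1
    have hN16 : 16 ≤ 2 ^ n := by omega
    have h2y : 2 ≤ 2 ^ y := by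
      calc (2:ℕ) = 2 ^ 1 := by norm_num
      _ ≤ 2 ^ y := Nat.pow_le_pow_right (by norm_num) hy
    have hw : w ≠ 0 := by
      rintro rfl
      rw [pow_zero] at h
      omega
    by_cases hyn : n ≤ y
    · exfalso
      obtain ⟨c, hc⟩ : (2:ℕ) ^ n ∣ 2 ^ y := pow_dvd_pow 2 hyn
      have hLHS : 3 * (2 ^ y + 1) % 2 ^ n = 3 := by
        have he : 3 * (2 ^ y + 1) = 2 ^ n * (3 * c) + 3 := by rw [hc]; ring
        rw [he, Nat.mul_add_mod]
        exact Nat.mod_eq_of_lt (by omega)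
      rcases lemC (2 ^ n) (by omega) w with hh | hh
      · have : (2 ^ n - 1) ^ w % 2 ^ n = 1 % 2 ^ n := hh
        rw [← h] at this
        rw [hLHS] at this
        rw [Nat.mod_eq_of_lt (by omega)] at this
        omega
      · have : (2 ^ n - 1) ^ w % 2 ^ n = (2 ^ n - 1) % 2 ^ n := hh
        rw [← h] at this
        rw [hLHS, Nat.mod_eq_of_lt (by omega)] at this
        omega
    · push_neg at hyn
      have hyb : 2 ^ y ≤ 2 ^ (n - 1) := Nat.pow_le_pow_right (by norm_num) (by omega)
      have hw1 : w = 1 := by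
        by_contra hw2
        have hw2' : 2 ≤ w := by omega
        have hM15 : 15 ≤ 2 ^ n - 1 := by omega
        have hsq : (2 ^ n - 1) ^ 2 ≤ (2 ^ n - 1) ^ w :=
          Nat.pow_le_pow_right (by omega) hw2'
        have hsq2 : (2 ^ n - 1) * (2 ^ n - 1) ≤ (2 ^ n - 1) ^ w := by
          rw [← pow_two]; exact hsq
        have hmul : 15 * (2 ^ n - 1) ≤ (2 ^ n - 1) * (2 ^ n - 1) :=
          Nat.mul_le_mul_right _ hM15
        omega
      subst hw1
      rw [pow_one] at h
      -- h : 3 * (2 ^ y + 1) = 2 ^ n - 1, so 3 * 2^y + 4 = 2^n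
      have key : 3 * 2 ^ y + 4 = 2 ^ n := by omega
      have hy3 : y < 3 := by
        by_contra hc
        push_neg at hc
        obtain ⟨a, ha⟩ : (8:ℕ) ∣ 2 ^ y := by
          have h1 : (2:ℕ) ^ 3 ∣ 2 ^ y := pow_dvd_pow 2 hc
          norm_num at h1; exact h1
        obtain ⟨b, hb⟩ : (8:ℕ) ∣ 2 ^ n := by
          have h1 : (2:ℕ) ^ 3 ∣ 2 ^ n := pow_dvd_pow 2 (by omega)
          simpa using h1
        omega
      interval_cases y
      · omega
      · have h16 : 2 ^ n = 2 ^ 4 := by norm_num at key ⊢; omega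
        have : n = 4 := Nat.pow_right_injective (by norm_num) h16
        refine ⟨by omega, rfl, rfl⟩
end
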